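/- There is a universal constant c > 0 such that for every finite undirected graph G = (V,E) with m ≥ 2 edges and every parameter φ ∈ (0,1), there exists a partition V_1, …, V_k of V such that Φ_{G{V_i}} ≥ φ for every i (in particular each induced subgraph G[V_i] has conductance at least φ), and the total number of inter-cluster edges satisfies ∑_i δ_G(V_i) ≤ c·φ·m·(log m)^3. -/

import Mathlib

/-!
STATEMENT 1 (Expander decomposition, Theorem 1.2):
There is a universal constant `c > 0` such that for every finite undirected graph `G`
with `m ≥ 2` edges and every `φ ∈ (0,1)`, there is a partition `V₁,…,V_k` of `V` with
`Φ_{G{Vᵢ}} ≥ φ` for every `i` (here `Φ_{G{A}} ≥ c` means: for every `S ⊆ A` with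
`vol_G(S) ≤ vol_G(A)/2`, `|E_G(S, A∖S)| ≥ c·vol_G(S)`), and
`∑ᵢ δ_G(Vᵢ) ≤ c·φ·m·(log m)³`.
-/

open Finset

noncomputable section
open scoped Classical

/-- `|E_G(S,T)|`: the number of edges of `G` with one endpoint in `S` and the other in `T`. -/
def eCount {V : Type*} [Fintype V] [DecidableEq V] (G : SimpleGraph V) (S T : Finset V) : ℕ :=
  ((S ×ˢ T).filter fun p => G.Adj p.1 p.2).card

/-- `vol_G(S) = ∑_{v ∈ S} deg_G(v)`. -/
def vol {V : Type*} [Fintype V] [DecidableEq V] (G : SimpleGraph V) (S : Finset V) : ℕ :=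
  ∑ v ∈ S, G.degree v

section Aux

variable {V : Type*} [Fintype V] [DecidableEq V] (G : SimpleGraph V)

lemma eCount_eq_sum (S T : Finset V) :
    eCount G S T = ∑ v ∈ S, (T.filter (G.Adj v)).card := by
  classical
  rw [eCount, Finset.card_filter, Finset.sum_product]
  refine Finset.sum_congr rfl fun v _ => ?_
  rw [Finset.card_filter]

lemma eCount_comm (S T : Finset V) : eCount G S T = eCount G T S := by
  classical
  unfold eCount
  refine Finset.card_bij (fun p _ => (p.2, p.1)) ?_ ?_ ?_
  · rintro ⟨a, b⟩ hp
    simp only [Finset.mem_filter, Finset.mem_product] at hp ⊢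
    exact ⟨⟨hp.1.2, hp.1.1⟩, hp.2.symm⟩
  · rintro ⟨a, b⟩ _ ⟨c, d⟩ _ h
    simpa [Prod.ext_iff, and_comm] using h
  · rintro ⟨a, b⟩ hp
    simp only [Finset.mem_filter, Finset.mem_product] at hp
    exact ⟨(b, a), by simp [Finset.mem_filter, hp.1.1, hp.1.2, hp.2.symm]⟩

lemma eCount_union_right {T₁ T₂ : Finset V} (S : Finset V) (h : Disjoint T₁ T₂) :
    eCount G S (T₁ ∪ T₂) = eCount G S T₁ + eCount G S T₂ := by
  classical
  simp only [eCount_eq_sum, ← Finset.sum_add_distrib]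
  refine Finset.sum_congr rfl fun v _ => ?_
  rw [Finset.filter_union, Finset.card_union_of_disjoint
    (Finset.disjoint_filter_filter h)]

lemma eCount_empty_right (S : Finset V) : eCount G S (∅ : Finset V) = 0 := by
  simp [eCount]

lemma sum_parts_eCount {A : Finset V} (P : Finpartition A) (T : Finset V) :
    ∑ B ∈ P.parts, eCount G B T = eCount G A T := by
  classical
  simp only [eCount_eq_sum]
  rw [← Finset.sum_biUnion]
  · congr 1
    rw [← Finset.sup_eq_biUnion]
    exact P.sup_parts
  · exact P.disjoint

lemma vol_union {S T : Finset V} (h : Disjoint S T) :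
    vol G (S ∪ T) = vol G S + vol G T := by
  rw [vol, vol, vol, Finset.sum_union h]

end Aux

/-- Combine two finpartitions of disjoint finsets. -/
def Finpartition.myUnion {V : Type*} [DecidableEq V] {S T : Finset V} (h : Disjoint S T)
    (P₁ : Finpartition S) (P₂ : Finpartition T) : Finpartition (S ∪ T) where
  parts := P₁.parts ∪ P₂.parts
  supIndep := by
    rw [Finset.supIndep_iff_pairwiseDisjoint]
    intro a ha b hb hab
    simp only [Finset.coe_union, Set.mem_union, Finset.mem_coe] at ha hb
    rcases ha with ha | ha <;> rcases hb with hb | hb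
    · exact P₁.disjoint ha hb hab
    · exact Disjoint.mono (P₁.le ha) (P₂.le hb) h
    · exact Disjoint.mono (P₂.le ha) (P₁.le hb) h.symm
    · exact P₂.disjoint ha hb hab
  sup_parts := by rw [Finset.sup_union, P₁.sup_parts, P₂.sup_parts]; rfl
  bot_notMem := by
    simp only [Finset.mem_union, not_or]
    exact ⟨P₁.bot_notMem, P₂.bot_notMem⟩

lemma Finpartition.myUnion_parts_disjoint {V : Type*} [DecidableEq V] {S T : Finset V}
    (h : Disjoint S T) (P₁ : Finpartition S) (P₂ : Finpartition T) :
    Disjoint P₁.parts P₂.parts := by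
  rw [Finset.disjoint_left]
  intro B hB₁ hB₂
  exact P₁.ne_bot hB₁ (disjoint_self.mp (h.mono (P₁.le hB₁) (P₂.le hB₂)))

section Main

variable {V : Type*} [Fintype V] [DecidableEq V]

/-- The key recursion: every finset admits a partition into parts with inner conductance
at least `φ`, cutting at most `2 φ vol(A) log₂(vol A)` (ordered-pair count) edges. -/
lemma decomp_rec (G : SimpleGraph V) (φ : ℝ) (hφ : 0 < φ) :
    ∀ n (A : Finset V), A.card ≤ n →
    ∃ P : Finpartition A,
      (∀ B ∈ P.parts, ∀ S ⊆ B, (vol G S : ℝ) ≤ (vol G B : ℝ) / 2 →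
        φ * (vol G S : ℝ) ≤ (eCount G S (B \ S) : ℝ)) ∧
      ((∑ B ∈ P.parts, eCount G B (A \ B) : ℕ) : ℝ) ≤
        2 * φ * (vol G A : ℝ) * Real.logb 2 (vol G A) := by
  intro n
  induction n with
  | zero =>
    intro A hA
    have hAe : A = ∅ := Finset.card_eq_zero.mp (Nat.le_zero.mp hA)
    refine ⟨(Finpartition.empty (Finset V)).copy hAe.symm, ?_, ?_⟩
    · intro B hB; simp [Finpartition.copy, Finpartition.empty] at hB
    · simp [Finpartition.copy, Finpartition.empty, hAe, vol]
  | succ n ih =>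
    intro A hA
    -- RHS is always nonnegative
    have hRHS : ∀ A' : Finset V, 0 ≤ 2 * φ * (vol G A' : ℝ) * Real.logb 2 (vol G A') := by
      intro A'
      rcases Nat.eq_zero_or_pos (vol G A') with h | h
      · simp [h]
      · have h1 : (1 : ℝ) ≤ (vol G A' : ℝ) := by exact_mod_cast h
        have := Real.logb_nonneg (b := 2) one_lt_two h1
        positivity
    by_cases hgood : ∀ S ⊆ A, (vol G S : ℝ) ≤ (vol G A : ℝ) / 2 →
        φ * (vol G S : ℝ) ≤ (eCount G S (A \ S) : ℝ)
    · rcases eq_or_ne A ∅ with hAe | hAne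
      · refine ⟨(Finpartition.empty (Finset V)).copy hAe.symm, ?_, ?_⟩
        · intro B hB; simp [Finpartition.copy, Finpartition.empty] at hB
        · simp [Finpartition.copy, Finpartition.empty, hAe, vol]
      · refine ⟨Finpartition.indiscrete hAne, ?_, ?_⟩
        · intro B hB
          simp only [Finpartition.indiscrete, Finset.mem_singleton] at hB
          subst hB
          exact hgood
        · have : ∑ B ∈ (Finpartition.indiscrete hAne).parts, eCount G B (A \ B) = 0 := by
            simp [Finpartition.indiscrete, Finset.sdiff_self, eCount_empty_right]
          rw [this]
          exact_mod_cast hRHS A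
    · push_neg at hgood
      obtain ⟨S, hSA, hSvol, hScut⟩ := hgood
      -- basic facts
      have hvolS_pos : 0 < (vol G S : ℝ) := by
        by_contra h
        push_neg at h
        have h0 : (vol G S : ℝ) = 0 := le_antisymm h (by positivity)
        rw [h0, mul_zero] at hScut
        exact absurd hScut (not_lt.mpr (by positivity))
      have hS_ne : S.Nonempty := by
        rcases Finset.eq_empty_or_nonempty S with h | h
        · exfalso; rw [h] at hvolS_pos; simp [vol] at hvolS_pos
        · exact h
      set T := A \ S with hT
      have hdisj : Disjoint S T := Finset.disjoint_sdiff
      have hST : S ∪ T = A := Finset.union_sdiff_of_subset hSA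
      have hvolsum : (vol G S : ℝ) + (vol G T : ℝ) = (vol G A : ℝ) := by
        have := vol_union G hdisj
        rw [hST] at this
        exact_mod_cast this.symm
      have hvolT_pos : (1 : ℝ) ≤ (vol G T : ℝ) := by
        have h1 : (1 : ℝ) ≤ (vol G S : ℝ) := by
          have : (0 : ℕ) < vol G S := by exact_mod_cast hvolS_pos
          exact_mod_cast this
        linarith
      have hT_ne : T.Nonempty := by
        rcases Finset.eq_empty_or_nonempty T with h | h
        · exfalso; rw [h] at hvolT_pos; simp [vol] at hvolT_pos; linarith
        · exact h
      -- cardinalities decrease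
      have hScard : S.card ≤ n := by
        have hssub : S ⊂ A := by
          refine Finset.ssubset_iff_of_subset hSA |>.mpr ?_
          obtain ⟨x, hx⟩ := hT_ne
          exact ⟨x, (Finset.mem_sdiff.mp hx).1, (Finset.mem_sdiff.mp hx).2⟩
        have := Finset.card_lt_card hssub
        omega
      have hTcard : T.card ≤ n := by
        have hssub : T ⊂ A := by
          refine Finset.ssubset_iff_of_subset (Finset.sdiff_subset) |>.mpr ?_
          obtain ⟨x, hx⟩ := hS_ne
          exact ⟨x, hSA hx, by simp [hT, hx]⟩
        have := Finset.card_lt_card hssub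
        omega
      obtain ⟨P₁, hP₁exp, hP₁cut⟩ := ih S hScard
      obtain ⟨P₂, hP₂exp, hP₂cut⟩ := ih T hTcard
      have hpd := Finpartition.myUnion_parts_disjoint hdisj P₁ P₂
      refine ⟨(Finpartition.myUnion hdisj P₁ P₂).copy hST, ?_, ?_⟩
      · intro B hB
        simp only [Finpartition.copy, Finpartition.myUnion, Finset.mem_union] at hB
        rcases hB with hB | hB
        · exact hP₁exp B hB
        · exact hP₂exp B hB
      · -- the cut bound
        have hsum : ∑ B ∈ ((Finpartition.myUnion hdisj P₁ P₂).copy hST).parts,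
            eCount G B (A \ B)
            = (∑ B ∈ P₁.parts, eCount G B (A \ B)) + ∑ B ∈ P₂.parts, eCount G B (A \ B) := by
          simp only [Finpartition.copy, Finpartition.myUnion]
          exact Finset.sum_union hpd
        have hsplit₁ : ∀ B ∈ P₁.parts,
            eCount G B (A \ B) = eCount G B (S \ B) + eCount G B T := by
          intro B hB
          have hBS : B ⊆ S := P₁.le hB
          have hABeq : A \ B = (S \ B) ∪ T := by
            rw [← hST, Finset.union_sdiff_distrib]
            congr 1
            rw [Finset.sdiff_eq_self_iff_disjoint]
            exact (hdisj.symm.mono_right hBS)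
          rw [hABeq, eCount_union_right]
          exact hdisj.mono_left Finset.sdiff_subset
        have hsplit₂ : ∀ B ∈ P₂.parts,
            eCount G B (A \ B) = eCount G B (T \ B) + eCount G B S := by
          intro B hB
          have hBT : B ⊆ T := P₂.le hB
          have hABeq : A \ B = (T \ B) ∪ S := by
            rw [← hST, Finset.union_comm S T, Finset.union_sdiff_distrib]
            congr 1
            rw [Finset.sdiff_eq_self_iff_disjoint]
            exact (hdisj.mono_right hBT)
          rw [hABeq, eCount_union_right]
          exact hdisj.symm.mono_left Finset.sdiff_subset
        have hsum₁ : ∑ B ∈ P₁.parts, eCount G B (A \ B)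
            = (∑ B ∈ P₁.parts, eCount G B (S \ B)) + eCount G S T := by
          rw [← sum_parts_eCount G P₁ T, ← Finset.sum_add_distrib]
          exact Finset.sum_congr rfl hsplit₁
        have hsum₂ : ∑ B ∈ P₂.parts, eCount G B (A \ B)
            = (∑ B ∈ P₂.parts, eCount G B (T \ B)) + eCount G S T := by
          rw [show eCount G S T = eCount G T S from eCount_comm G S T,
            ← sum_parts_eCount G P₂ S, ← Finset.sum_add_distrib]
          exact Finset.sum_congr rfl hsplit₂
        -- now combine in ℝ
        have hcutST : (eCount G S T : ℝ) < φ * (vol G S : ℝ) := hScut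
        have hlogS : Real.logb 2 (vol G S) + 1 ≤ Real.logb 2 (vol G A) := by
          have h2S : Real.logb 2 (vol G S) + 1 = Real.logb 2 (2 * (vol G S : ℝ)) := by
            rw [Real.logb_mul two_ne_zero (ne_of_gt hvolS_pos),
              Real.logb_self_eq_one one_lt_two]
            ring
          rw [h2S]
          apply Real.logb_le_logb_of_le one_lt_two (by linarith)
          linarith
        have hlogT : Real.logb 2 (vol G T) ≤ Real.logb 2 (vol G A) := by
          apply Real.logb_le_logb_of_le one_lt_two (by linarith)
          linarith
        have hlogT0 : 0 ≤ Real.logb 2 (vol G T) := Real.logb_nonneg one_lt_two hvolT_pos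
        have hvolT_nonneg : (0:ℝ) ≤ (vol G T : ℝ) := by positivity
        rw [hsum]
        push_cast [hsum₁, hsum₂]
        have e1 : ((∑ B ∈ P₁.parts, eCount G B (S \ B) : ℕ) : ℝ)
            ≤ 2 * φ * (vol G S : ℝ) * Real.logb 2 (vol G S) := hP₁cut
        have e2 : ((∑ B ∈ P₂.parts, eCount G B (T \ B) : ℕ) : ℝ)
            ≤ 2 * φ * (vol G T : ℝ) * Real.logb 2 (vol G T) := hP₂cut
        push_cast at e1 e2
        have key : 2 * φ * (vol G S : ℝ) * Real.logb 2 (vol G S) + 2 * φ * (vol G S : ℝ)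
            ≤ 2 * φ * (vol G S : ℝ) * Real.logb 2 (vol G A) := by
          have := mul_le_mul_of_nonneg_left hlogS (by positivity : (0:ℝ) ≤ 2 * φ * (vol G S : ℝ))
          linarith [this]
        have keyT : 2 * φ * (vol G T : ℝ) * Real.logb 2 (vol G T)
            ≤ 2 * φ * (vol G T : ℝ) * Real.logb 2 (vol G A) := by
          apply mul_le_mul_of_nonneg_left hlogT (by positivity)
        have final : 2 * φ * (vol G S : ℝ) * Real.logb 2 (vol G A)
            + 2 * φ * (vol G T : ℝ) * Real.logb 2 (vol G A)
            = 2 * φ * (vol G A : ℝ) * Real.logb 2 (vol G A) := by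
          rw [← hvolsum]; ring
        nlinarith [e1, e2, hcutST, key, keyT, final]

end Main

theorem expander_decomposition :
    ∃ c : ℝ, 0 < c ∧
      ∀ (V : Type) [Fintype V] [DecidableEq V] (G : SimpleGraph V) (φ : ℝ),
        2 ≤ G.edgeFinset.card → 0 < φ → φ < 1 →
        ∃ P : Finpartition (Finset.univ : Finset V),
          -- Φ_{G{Vᵢ}} ≥ φ for every part Vᵢ
          (∀ A ∈ P.parts, ∀ S ⊆ A, (vol G S : ℝ) ≤ (vol G A : ℝ) / 2 →
            φ * (vol G S : ℝ) ≤ (eCount G S (A \ S) : ℝ)) ∧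
          -- total number of inter-cluster edges is at most c·φ·m·(log m)³
          ((∑ A ∈ P.parts, eCount G A Aᶜ : ℕ) : ℝ) ≤
            c * φ * G.edgeFinset.card * (Real.log G.edgeFinset.card) ^ 3 := by
  refine ⟨8 / (Real.log 2)^3, by positivity, ?_⟩
  intro V _ _ G φ hm hφ0 hφ1
  obtain ⟨P, hexp, hcut⟩ := decomp_rec G φ hφ0 (Finset.univ : Finset V).card Finset.univ le_rfl
  refine ⟨P, hexp, ?_⟩
  have hcompl : ∀ A : Finset V, Aᶜ = Finset.univ \ A := fun A => by
    rw [Finset.compl_eq_univ_sdiff]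
  have hcut' : ((∑ A ∈ P.parts, eCount G A Aᶜ : ℕ) : ℝ) ≤
      2 * φ * (vol G Finset.univ : ℝ) * Real.logb 2 (vol G Finset.univ) := by
    simpa only [hcompl] using hcut
  set m : ℕ := G.edgeFinset.card with hm_def
  have hvol : vol G (Finset.univ : Finset V) = 2 * m := by
    rw [vol]
    exact G.sum_degrees_eq_twice_card_edges
  rw [hvol] at hcut'
  have hm2 : (2:ℝ) ≤ (m:ℝ) := by exact_mod_cast hm
  have hl2 : (0:ℝ) < Real.log 2 := Real.log_pos one_lt_two
  have hL : Real.log 2 ≤ Real.log m := Real.log_le_log (by norm_num) hm2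
  have hlogb : Real.logb 2 ((2 * m : ℕ) : ℝ) ≤ 2 * Real.log m / Real.log 2 := by
    rw [Real.logb]
    push_cast
    rw [Real.log_mul two_ne_zero (by positivity : (m:ℝ) ≠ 0)]
    rw [div_le_div_iff_of_pos_right hl2]
    linarith
  have hmpos : (0:ℝ) < (m:ℝ) := by linarith
  have hLpos : 0 < Real.log m := lt_of_lt_of_le hl2 hL
  have hll : Real.log 2 ^ 2 ≤ Real.log (m:ℝ) ^ 2 := by nlinarith
  calc ((∑ A ∈ P.parts, eCount G A Aᶜ : ℕ) : ℝ)
      ≤ 2 * φ * ((2 * m : ℕ) : ℝ) * Real.logb 2 ((2 * m : ℕ) : ℝ) := hcut'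
    _ ≤ 2 * φ * ((2 * m : ℕ) : ℝ) * (2 * Real.log m / Real.log 2) := by
        apply mul_le_mul_of_nonneg_left hlogb (by positivity)
    _ = (8 * φ * (m:ℝ) * Real.log m) / Real.log 2 := by push_cast; ring
    _ ≤ (8 * φ * (m:ℝ) * (Real.log m) ^ 3) / (Real.log 2) ^ 3 := by
        rw [div_le_div_iff₀ hl2 (by positivity)]
        nlinarith [mul_le_mul_of_nonneg_left hll
          (show (0:ℝ) ≤ 8 * φ * (m:ℝ) * Real.log (m:ℝ) * Real.log 2 by positivity)]
    _ = 8 / (Real.log 2)^3 * φ * (m:ℝ) * (Real.log m) ^ 3 := by ring
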